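/- arXiv:2408.07656 — 7 statements merged into one kernel-verified Lean document; each statement's English description precedes it below -/
import Mathlib

section
/- Let n ≥ 2 and let κ = (κ_1,…,κ_n) ∈ K_2 be ordered decreasingly, κ_1 ≥ κ_2 ≥ ⋯ ≥ κ_n. Then κ_n > −((n−2)/n)·S_1(κ). -/
/- In `K₂` the Newton identity `2 S₂ = S₁² - Σ κᵢ²` gives `Σ κᵢ² < S₁²`. Cauchy–Schwarz on the
`n - 1` entries other than `κⱼ` then yields `(S₁ - κⱼ)² < (n - 1)(S₁ - κⱼ)(S₁ + κⱼ)`, which forces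
`S₁ - κⱼ > 0` (as `S₁ > 0`), and dividing by it gives `n κⱼ > -(n - 2) S₁`. -/

open Finset

/-- The `k`-th elementary symmetric polynomial of `x ∈ ℝ^m`. -/
noncomputable def esymm {m : ℕ} (k : ℕ) (x : Fin m → ℝ) : ℝ :=
  ∑ t ∈ Finset.powersetCard k (Finset.univ : Finset (Fin m)), ∏ i ∈ t, x i

lemma eval_mvPolynomial_esymm {m : ℕ} (k : ℕ) (x : Fin m → ℝ) :
    MvPolynomial.eval x (MvPolynomial.esymm (Fin m) ℝ k) = esymm k x := by
  simp [MvPolynomial.esymm, esymm]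

lemma esymm_one_eq_sum {m : ℕ} (x : Fin m → ℝ) : esymm 1 x = ∑ i, x i := by
  simp [esymm, powersetCard_one]

lemma two_mul_esymm_two {m : ℕ} (x : Fin m → ℝ) :
    2 * esymm 2 x = (∑ i, x i) ^ 2 - ∑ i, x i ^ 2 := by
  have newton := congrArg (MvPolynomial.eval x) (MvPolynomial.mul_esymm_eq_sum (Fin m) ℝ 2)
  simp only [sum_filter, Nat.sum_antidiagonal_eq_sum_range_succ_mk, sum_range_succ,
    sum_range_zero] at newton
  simp [eval_mvPolynomial_esymm, MvPolynomial.psum] at newton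
  linear_combination newton

lemma sq_sum_sub_le_card_sub_one_mul {ι : Type*} [Fintype ι] [DecidableEq ι] (x : ι → ℝ) (j : ι) :
    (∑ i, x i - x j) ^ 2 ≤ (Fintype.card ι - 1) * (∑ i, x i ^ 2 - x j ^ 2) := by
  have hcs := sq_sum_le_card_mul_sum_sq (s := univ.erase j) (f := x)
  rwa [sum_erase_eq_sub (mem_univ j), sum_erase_eq_sub (mem_univ j),
    card_erase_of_mem (mem_univ j), card_univ, Nat.cast_pred (Fintype.card_pos_iff.2 ⟨j⟩)] at hcs

theorem neg_div_mul_sum_lt_of_sum_sq_lt_sq_sum {ι : Type*} [Fintype ι] (x : ι → ℝ)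
    (hsum : 0 < ∑ i, x i) (hsq : ∑ i, x i ^ 2 < (∑ i, x i) ^ 2) (j : ι) :
    -(((Fintype.card ι : ℝ) - 2) / Fintype.card ι) * ∑ i, x i < x j := by
  classical
  have hcard : 1 < Fintype.card ι := by
    by_contra! h
    have := Fintype.card_le_one_iff_subsingleton.1 h
    simp [Fintype.sum_subsingleton _ j] at hsq
  have hcs := sq_sum_sub_le_card_sub_one_mul x j
  set n : ℝ := (Fintype.card ι : ℝ)
  set s := ∑ i, x i
  have hn : 1 < n := Nat.one_lt_cast.2 hcard
  have hquad : (s - x j) ^ 2 < (n - 1) * ((s - x j) * (s + x j)) := by nlinarith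
  have hpos : 0 < s - x j := by
    by_contra! h
    have hrhs : (n - 1) * ((s - x j) * (s + x j)) ≤ 0 :=
      mul_nonpos_of_nonneg_of_nonpos (by linarith) (mul_nonpos_of_nonpos_of_nonneg h (by linarith))
    nlinarith [sq_nonneg (s - x j)]
  have hlin : s - x j < (n - 1) * (s + x j) := by nlinarith
  rw [neg_mul, div_mul_eq_mul_div, neg_lt, lt_div_iff₀ (by linarith)]
  linarith

theorem stmt_1 (n : ℕ) (hn : 2 ≤ n) (κ : Fin n → ℝ)
    (h1 : 0 < esymm 1 κ) (h2 : 0 < esymm 2 κ) :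
    κ ⟨n - 1, by omega⟩ > -(((n : ℝ) - 2) / n) * esymm 1 κ := by
  have hsq : ∑ i, κ i ^ 2 < (∑ i, κ i) ^ 2 := by linarith [two_mul_esymm_two κ]
  rw [esymm_one_eq_sum] at h1 ⊢
  simpa using neg_div_mul_sum_lt_of_sum_sq_lt_sq_sum κ h1 hsq ⟨n - 1, by omega⟩
end

section
/- Let n ≥ 2 and let κ = (κ_1,…,κ_n) ∈ K_2 be ordered decreasingly, κ_1 ≥ κ_2 ≥ ⋯ ≥ κ_n. Then for every index i with 2 ≤ i ≤ n, S_1(κ) − κ_i ≥ (1 − i^{−1/2})·S_1(κ). -/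
open Finset

lemma esymm_one {m : ℕ} (x : Fin m → ℝ) : esymm 1 x = ∑ j, x j := by
  unfold esymm
  rw [Finset.powersetCard_one, Finset.sum_map]
  simp

lemma esymm_two_pairs {m : ℕ} (x : Fin m → ℝ) :
    ∑ p ∈ (Finset.univ ×ˢ Finset.univ : Finset (Fin m × Fin m)).filter
      (fun p => p.1 < p.2), x p.1 * x p.2 = esymm 2 x := by
  unfold esymm
  refine Finset.sum_bij (fun p _ => ({p.1, p.2} : Finset (Fin m))) ?_ ?_ ?_ ?_
  · intro p hp
    simp only [Finset.mem_filter] at hp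
    rw [Finset.mem_powersetCard_univ]
    exact Finset.card_pair hp.2.ne
  · intro p hp q hq h
    simp only [Finset.mem_filter] at hp hq
    have h' : ({p.1, p.2} : Finset (Fin m)) = {q.1, q.2} := h
    have h1 : p.1 ∈ ({q.1, q.2} : Finset (Fin m)) := by rw [← h']; simp
    have h2 : p.2 ∈ ({q.1, q.2} : Finset (Fin m)) := by rw [← h']; simp
    have h3 : q.1 ∈ ({p.1, p.2} : Finset (Fin m)) := by rw [h']; simp
    simp only [Finset.mem_insert, Finset.mem_singleton] at h1 h2 h3
    have := hp.2; have := hq.2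
    rcases h1 with h1 | h1 <;> rcases h2 with h2 | h2 <;>
      [skip; skip; skip; skip] <;>
      first
        | (exact Prod.ext h1 h2)
        | (exfalso; rcases h3 with h3 | h3 <;> omega)
  · intro t ht
    rw [Finset.mem_powersetCard_univ, Finset.card_eq_two] at ht
    obtain ⟨a, b, hab, rfl⟩ := ht
    rcases lt_or_gt_of_ne hab with hlt | hlt
    · exact ⟨(a, b), by simp [Finset.mem_filter, hlt], rfl⟩
    · exact ⟨(b, a), by simp [Finset.mem_filter, hlt], by
        simp [Finset.pair_comm]⟩
  · intro p hp
    simp only [Finset.mem_filter] at hp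
    rw [Finset.prod_pair hp.2.ne]

lemma esymm_two {m : ℕ} (x : Fin m → ℝ) :
    (∑ j, x j) ^ 2 = (∑ j, x j ^ 2) + 2 * esymm 2 x := by
  have hsq : (∑ j, x j) ^ 2 = ∑ p ∈ (Finset.univ ×ˢ Finset.univ : Finset (Fin m × Fin m)),
      x p.1 * x p.2 := by
    rw [sq, Finset.sum_mul_sum, ← Finset.sum_product']
  rw [hsq]
  have hsplit := Finset.sum_filter_add_sum_filter_not
    ((Finset.univ ×ˢ Finset.univ : Finset (Fin m × Fin m)))
    (fun p => p.1 = p.2) (fun p => x p.1 * x p.2)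
  rw [← hsplit]
  have hdiag : ∑ p ∈ (Finset.univ ×ˢ Finset.univ : Finset (Fin m × Fin m)).filter
      (fun p => p.1 = p.2), x p.1 * x p.2 = ∑ j, x j ^ 2 := by
    refine Finset.sum_bij (fun p _ => p.1) ?_ ?_ ?_ ?_
    · intro p _; exact Finset.mem_univ _
    · intro p hp q hq h
      simp only [Finset.mem_filter] at hp hq
      have h' : p.1 = q.1 := h
      exact Prod.ext h' (by rw [← hp.2, ← hq.2, h'])
    · intro j _
      exact ⟨(j, j), by simp [Finset.mem_filter], rfl⟩
    · intro p hp
      simp only [Finset.mem_filter] at hp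
      rw [← hp.2, sq]
  have hoff : ∑ p ∈ (Finset.univ ×ˢ Finset.univ : Finset (Fin m × Fin m)).filter
      (fun p => ¬ p.1 = p.2), x p.1 * x p.2 = 2 * esymm 2 x := by
    have hsplit2 := Finset.sum_filter_add_sum_filter_not
      (((Finset.univ ×ˢ Finset.univ : Finset (Fin m × Fin m))).filter (fun p => ¬ p.1 = p.2))
      (fun p => p.1 < p.2) (fun p => x p.1 * x p.2)
    rw [Finset.filter_filter, Finset.filter_filter] at hsplit2
    have h1 : (Finset.univ ×ˢ Finset.univ : Finset (Fin m × Fin m)).filter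
        (fun p => ¬ p.1 = p.2 ∧ p.1 < p.2) =
        (Finset.univ ×ˢ Finset.univ : Finset (Fin m × Fin m)).filter (fun p => p.1 < p.2) := by
      apply Finset.filter_congr; intro p _
      constructor
      · exact fun h => h.2
      · exact fun h => ⟨h.ne, h⟩
    have h2 : (Finset.univ ×ˢ Finset.univ : Finset (Fin m × Fin m)).filter
        (fun p => ¬ p.1 = p.2 ∧ ¬ p.1 < p.2) =
        (Finset.univ ×ˢ Finset.univ : Finset (Fin m × Fin m)).filter (fun p => p.2 < p.1) := by
      apply Finset.filter_congr; intro p _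
      constructor
      · intro h; exact lt_of_le_of_ne (not_lt.mp h.2) (Ne.symm h.1)
      · intro h; exact ⟨(Ne.symm h.ne), not_lt.mpr h.le⟩
    rw [h1, h2] at hsplit2
    have hswap : ∑ p ∈ (Finset.univ ×ˢ Finset.univ : Finset (Fin m × Fin m)).filter
        (fun p => p.2 < p.1), x p.1 * x p.2 =
        ∑ p ∈ (Finset.univ ×ˢ Finset.univ : Finset (Fin m × Fin m)).filter
        (fun p => p.1 < p.2), x p.1 * x p.2 := by
      refine Finset.sum_nbij' (fun p => p.swap) (fun p => p.swap) ?_ ?_ ?_ ?_ ?_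
      · intro p hp; simp only [Finset.mem_filter] at hp ⊢
        exact ⟨by simp, hp.2⟩
      · intro p hp; simp only [Finset.mem_filter] at hp ⊢
        exact ⟨by simp, hp.2⟩
      · intro p _; exact Prod.swap_swap p
      · intro p _; exact Prod.swap_swap p
      · intro p _; exact mul_comm _ _
    rw [hswap, esymm_two_pairs] at hsplit2
    rw [← hsplit2]; ring
  rw [hdiag, hoff]

theorem stmt_4 (n : ℕ) (hn : 2 ≤ n) (κ : Fin n → ℝ)
    (hord : ∀ i j : Fin n, i ≤ j → κ j ≤ κ i)
    (h1 : 0 < esymm 1 κ) (h2 : 0 < esymm 2 κ)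
    (i : Fin n) (hi : 1 ≤ (i : ℕ)) :
    esymm 1 κ - κ i ≥ (1 - 1 / Real.sqrt ((i : ℕ) + 1)) * esymm 1 κ := by
  set S := esymm 1 κ with hS
  have hSsum : S = ∑ j, κ j := esymm_one κ
  have hsqrt_pos : 0 < Real.sqrt ((i : ℕ) + 1) := by
    apply Real.sqrt_pos.mpr; positivity
  rcases le_or_gt (κ i) 0 with hneg | hpos
  · have : (1 - 1 / Real.sqrt ((i : ℕ) + 1)) ≤ 1 := by
      have : 0 ≤ 1 / Real.sqrt ((i : ℕ) + 1) := by positivity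
      linarith
    nlinarith
  · -- κ i > 0
    have hQlt : ∑ j, κ j ^ 2 < S ^ 2 := by
      have := esymm_two κ
      rw [← hSsum] at this
      linarith
    have hIic : ((i : ℕ) + 1 : ℝ) * κ i ^ 2 ≤ ∑ j, κ j ^ 2 := by
      have hsub : ∑ j ∈ Finset.Iic i, κ j ^ 2 ≤ ∑ j, κ j ^ 2 :=
        Finset.sum_le_sum_of_subset_of_nonneg (Finset.subset_univ _)
          (fun j _ _ => sq_nonneg _)
      have hlower : ((i : ℕ) + 1 : ℝ) * κ i ^ 2 ≤ ∑ j ∈ Finset.Iic i, κ j ^ 2 := by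
        have hcard : (Finset.Iic i).card = (i : ℕ) + 1 := Fin.card_Iic i
        have := Finset.card_nsmul_le_sum (Finset.Iic i) (fun j => κ j ^ 2) (κ i ^ 2)
          (fun j hj => by
            have hji : j ≤ i := Finset.mem_Iic.mp hj
            have hk : κ i ≤ κ j := hord j i hji
            show κ i ^ 2 ≤ κ j ^ 2
            nlinarith)
        rw [hcard] at this
        calc ((i : ℕ) + 1 : ℝ) * κ i ^ 2 = ((i : ℕ) + 1) • (κ i ^ 2) := by
              rw [nsmul_eq_mul]; push_cast; ring
          _ ≤ _ := this
      linarith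
    have hki : κ i < S / Real.sqrt ((i : ℕ) + 1) := by
      have hk2 : (Real.sqrt ((i : ℕ) + 1) * κ i) ^ 2 < S ^ 2 := by
        rw [mul_pow, Real.sq_sqrt (by positivity : (0:ℝ) ≤ (i : ℕ) + 1)]
        linarith
      have hS0 : 0 < S := h1
      have hlt : Real.sqrt ((i : ℕ) + 1) * κ i < S := by
        nlinarith [mul_pos hsqrt_pos hpos]
      rw [lt_div_iff₀ hsqrt_pos]
      linarith [mul_comm (Real.sqrt ((i : ℕ) + 1)) (κ i)]
    have heq : (1 - 1 / Real.sqrt ((i : ℕ) + 1)) * S = S - S / Real.sqrt ((i : ℕ) + 1) := by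
      field_simp
    rw [ge_iff_le, heq]
    linarith
end

section
/- Let n ≥ 3 and let κ = (κ_1,…,κ_n) ∈ K_2 be ordered decreasingly, κ_1 ≥ ⋯ ≥ κ_n, and suppose κ_n < 0. Write κ' = (κ|n) = (κ_1,…,κ_{n−1}). Then S_1(κ') > 0, 0 < S_2(κ') − S_2(κ) < S_2(κ'), and S_1(κ)/(−κ_n) = −1 + S_1(κ')²/(S_2(κ') − S_2(κ)). -/
/-!
Deleting the negative entry `λ = κₙ` splits `S₁(κ) = S₁(κ') + λ` and `S₂(κ) = S₂(κ') + λ S₁(κ')`.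
Since `λ < 0 < S₁(κ)`, the first gives `S₁(κ') > -λ > 0`; the second makes
`S₂(κ') - S₂(κ) = -λ S₁(κ')` positive and, as `S₂(κ) > 0`, smaller than `S₂(κ')`.
The identity then reads `(S₁(κ') + λ) / (-λ) = -1 + S₁(κ')² / (-λ S₁(κ'))`.
-/

open Finset

theorem Multiset.esymm_cons_succ {R : Type*} [CommSemiring R] (a : R) (s : Multiset R) (k : ℕ) :
    (a ::ₘ s).esymm (k + 1) = s.esymm (k + 1) + a * s.esymm k := by
  simp only [Multiset.esymm, Multiset.powersetCard_cons, Multiset.map_add, Multiset.sum_add,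
    Multiset.map_map, Function.comp_def, Multiset.prod_cons, Multiset.sum_map_mul_left]

theorem esymm_eq_multiset_esymm {m : ℕ} (k : ℕ) (x : Fin m → ℝ) :
    esymm k x = ((univ : Finset (Fin m)).val.map x).esymm k :=
  (Finset.esymm_map_val x univ k).symm

theorem esymm_zero {m : ℕ} (x : Fin m → ℝ) : esymm 0 x = 1 := by
  simp [esymm]

theorem esymm_succ_eq_esymm_init {m : ℕ} (k : ℕ) (κ : Fin (m + 1) → ℝ) :
    esymm (k + 1) κ = esymm (k + 1) (Fin.init κ) + κ (Fin.last m) * esymm k (Fin.init κ) := by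
  have hsplit : (univ : Finset (Fin (m + 1))).val.map κ
      = κ (Fin.last m) ::ₘ (univ : Finset (Fin m)).val.map (Fin.init κ) := by
    rw [Fin.univ_castSuccEmb, Finset.cons_val, Multiset.map_cons, Finset.map_val,
      Multiset.map_map]
    rfl
  rw [esymm_eq_multiset_esymm, esymm_eq_multiset_esymm, esymm_eq_multiset_esymm, hsplit,
    Multiset.esymm_cons_succ]

theorem esymm_one_eq_esymm_one_init {m : ℕ} (κ : Fin (m + 1) → ℝ) :
    esymm 1 κ = esymm 1 (Fin.init κ) + κ (Fin.last m) := by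
  rw [esymm_succ_eq_esymm_init 0, esymm_zero, mul_one]

theorem esymm_two_init_sub_esymm_two {m : ℕ} (κ : Fin (m + 1) → ℝ) :
    esymm 2 (Fin.init κ) - esymm 2 κ = -κ (Fin.last m) * esymm 1 (Fin.init κ) := by
  rw [esymm_succ_eq_esymm_init 1]
  ring

section DeleteNegativeEntry

variable {m : ℕ} {κ : Fin (m + 1) → ℝ}

theorem esymm_one_init_pos (h1 : 0 < esymm 1 κ) (hneg : κ (Fin.last m) < 0) :
    0 < esymm 1 (Fin.init κ) := by
  linarith [esymm_one_eq_esymm_one_init κ]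

theorem esymm_two_init_sub_esymm_two_pos (h1 : 0 < esymm 1 κ) (hneg : κ (Fin.last m) < 0) :
    0 < esymm 2 (Fin.init κ) - esymm 2 κ := by
  rw [esymm_two_init_sub_esymm_two]
  exact mul_pos (neg_pos.mpr hneg) (esymm_one_init_pos h1 hneg)

theorem esymm_one_div_neg_last (h1 : 0 < esymm 1 κ) (hneg : κ (Fin.last m) < 0) :
    esymm 1 κ / (-κ (Fin.last m))
      = -1 + esymm 1 (Fin.init κ) ^ 2 / (esymm 2 (Fin.init κ) - esymm 2 κ) := by
  have hA := (esymm_one_init_pos h1 hneg).ne'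
  rw [esymm_two_init_sub_esymm_two, esymm_one_eq_esymm_one_init]
  field_simp [hneg.ne]
  ring

end DeleteNegativeEntry

theorem stmt_8 (n : ℕ) (hn : 3 ≤ n) (κ : Fin n → ℝ)
    (h1 : 0 < esymm 1 κ) (h2 : 0 < esymm 2 κ)
    (hneg : κ ⟨n - 1, by omega⟩ < 0)
    (κ' : Fin (n - 1) → ℝ) (hκ' : ∀ j : Fin (n - 1), κ' j = κ (Fin.castLE (Nat.sub_le n 1) j)) :
    0 < esymm 1 κ' ∧
    0 < esymm 2 κ' - esymm 2 κ ∧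
    esymm 2 κ' - esymm 2 κ < esymm 2 κ' ∧
    esymm 1 κ / (-κ ⟨n - 1, by omega⟩)
      = -1 + (esymm 1 κ') ^ 2 / (esymm 2 κ' - esymm 2 κ) := by
  obtain ⟨m, rfl⟩ : ∃ m, n = m + 1 := ⟨n - 1, by omega⟩
  obtain rfl : κ' = Fin.init κ := funext hκ'
  change κ (Fin.last m) < 0 at hneg
  change _ ∧ _ ∧ _ ∧ esymm 1 κ / (-κ (Fin.last m)) = _
  exact ⟨esymm_one_init_pos h1 hneg, esymm_two_init_sub_esymm_two_pos h1 hneg, by linarith,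
    esymm_one_div_neg_last h1 hneg⟩
end

section
/- For every integer n ≥ 2, α_n·(β_n − (n−2)/n) ≥ −(2/√3 − 1). -/
/-!
Writing `s = √(3n² + 1)`, the product collapses to `(3n + 2 - 2s) / (3n)`, because the common
factor `n - 1` cancels against the denominator of `α_n`. The bound is then equivalent to
`s ≤ √3 n + 1`, which holds since `(√3 n + 1)² = 3n² + 2√3 n + 1`.
-/

/-- `α_n = (√(3n²+1) − (n+1)) / (3(n−1))`. -/
noncomputable def alph (n : ℕ) : ℝ :=
  (Real.sqrt (3 * (n : ℝ) ^ 2 + 1) - ((n : ℝ) + 1)) / (3 * ((n : ℝ) - 1))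

/-- `β_n = (√(3n²+1) − (n−1)) / (2n)`. -/
noncomputable def beta (n : ℕ) : ℝ :=
  (Real.sqrt (3 * (n : ℝ) ^ 2 + 1) - ((n : ℝ) - 1)) / (2 * (n : ℝ))

open Real

lemma sqrt_three_mul_sq_add_one_le {x : ℝ} (hx : 0 ≤ x) :
    √(3 * x ^ 2 + 1) ≤ √3 * x + 1 := by
  rw [sqrt_le_left (by positivity)]
  nlinarith [sq_sqrt (show (0 : ℝ) ≤ 3 by norm_num), sqrt_nonneg 3]

lemma alph_mul_beta_sub_eq (n : ℕ) (hn : 2 ≤ n) :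
    alph n * (beta n - ((n : ℝ) - 2) / n) =
      1 - 2 * (√(3 * (n : ℝ) ^ 2 + 1) - 1) / (3 * n) := by
  have hx : (2 : ℝ) ≤ n := by exact_mod_cast hn
  have hs := sq_sqrt (show (0 : ℝ) ≤ 3 * (n : ℝ) ^ 2 + 1 by positivity)
  have hn0 : (n : ℝ) ≠ 0 := by positivity
  have hn1 : (n : ℝ) - 1 ≠ 0 := by linarith
  rw [alph, beta]
  field_simp
  linear_combination hs

theorem stmt_9 (n : ℕ) (hn : 2 ≤ n) :
    alph n * (beta n - ((n : ℝ) - 2) / n) ≥ -(2 / Real.sqrt 3 - 1) := by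
  have hn0 : (0 : ℝ) < n := Nat.cast_pos.mpr (by omega)
  have hs := sqrt_three_mul_sq_add_one_le hn0.le
  rw [alph_mul_beta_sub_eq n hn, ge_iff_le, neg_sub, sub_le_sub_iff_left,
    div_le_div_iff₀ (by positivity) (by positivity)]
  calc 2 * (√(3 * (n : ℝ) ^ 2 + 1) - 1) * √3 ≤ 2 * (√3 * n) * √3 := by gcongr; linarith
    _ = 2 * (3 * n) := by
      linear_combination (2 * (n : ℝ)) * sq_sqrt (show (0 : ℝ) ≤ 3 by norm_num)
end

section
/- For every integer n ≥ 2, α_n·β_n > 2/(N(N−1)) where N = 3 + 2√3; equivalently, α_n·β_n > (9 − 5√3)/6. -/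
theorem stmt_10 (n : ℕ) (hn : 2 ≤ n) :
    alph n * beta n > 2 / ((3 + 2 * Real.sqrt 3) * ((3 + 2 * Real.sqrt 3) - 1)) ∧
    alph n * beta n > (9 - 5 * Real.sqrt 3) / 6 := by
  have hN : (2:ℝ) ≤ (n:ℝ) := by exact_mod_cast hn
  set N : ℝ := (n:ℝ) with hNdef
  have ht2 : (Real.sqrt 3)^2 = 3 := Real.sq_sqrt (by norm_num)
  set t := Real.sqrt 3 with htdef
  have ht0 : 0 ≤ t := Real.sqrt_nonneg 3
  have htlt : t < 44/25 := by nlinarith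
  have htgt : 76/45 < t := by nlinarith
  have hs0 : 0 ≤ Real.sqrt (3*N^2+1) := Real.sqrt_nonneg _
  have hs2 : (Real.sqrt (3*N^2+1))^2 = 3*N^2+1 := Real.sq_sqrt (by nlinarith)
  set s := Real.sqrt (3*N^2+1) with hsdef
  have hA0 : 0 < 5*t*(N-1) - 5*N + 9 := by nlinarith
  have hinner : 0 < (44-25*t)*N + 45*t - 76 := by
    nlinarith [mul_nonneg (by linarith : (0:ℝ) ≤ 44-25*t) (by linarith : (0:ℝ) ≤ N-2)]
  have hfac : 0 < (N-1)*((44-25*t)*N + 45*t - 76) := mul_pos (by linarith) hinner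
  have hA2 : (2*s)^2 < (5*t*(N-1) - 5*N + 9)^2 := by
    nlinarith [hfac, sq_nonneg (N-1), ht2, hs2]
  have hA : 2*s < 5*t*(N-1) - 5*N + 9 :=
    lt_of_pow_lt_pow_left₀ 2 hA0.le hA2
  have h1 : N - 1 ≠ 0 := by intro h; nlinarith [h]
  have h2 : N ≠ 0 := by intro h; nlinarith [h]
  have halph : alph n * beta n = (2*N - s)/(3*(N-1)) := by
    unfold alph beta
    rw [← hNdef, ← hsdef]
    field_simp
    linear_combination hs2
  have key : alph n * beta n > (9 - 5*t)/6 := by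
    rw [halph, gt_iff_lt, div_lt_div_iff₀ (by norm_num) (by linarith)]
    nlinarith
  constructor
  · have heq : 2/((3+2*t)*((3+2*t)-1)) = (9-5*t)/6 := by
      have h9 : (3+2*t)*((3+2*t)-1) = 18+10*t := by linear_combination 4*ht2
      rw [h9, div_eq_div_iff (by linarith) (by norm_num)]
      linear_combination 50*ht2
    rw [heq]; exact key
  · exact key
end

section
/- For every integer n ≥ 2: α_n ≤ α_{n+1}, β_{n+1} ≤ β_n, α_n < (√3 − 1)/3, and β_n ≤ (√13 − 1)/4. -/
open Real Set

noncomputable def rho (x : ℝ) : ℝ := √(3 + x ^ 2) + x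

lemma rho_strictMonoOn : StrictMonoOn rho (Ici 0) := by
  intro x hx y hy hxy
  have hsq : x ^ 2 ≤ y ^ 2 := pow_le_pow_left₀ hx hxy.le 2
  have : √(3 + x ^ 2) ≤ √(3 + y ^ 2) := sqrt_le_sqrt (by linarith)
  unfold rho
  linarith

lemma rho_pos {x : ℝ} (hx : 0 ≤ x) : 0 < rho x := by
  have : 0 < √(3 + x ^ 2) := sqrt_pos.2 (by positivity)
  unfold rho
  linarith

lemma rho_zero : rho 0 = √3 := by simp [rho]

lemma rho_inv_two : rho 2⁻¹ = (√13 + 1) / 2 := by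
  have h : (3 : ℝ) + 2⁻¹ ^ 2 = 13 / 2 ^ 2 := by norm_num
  rw [rho, h, sqrt_div' _ (by positivity), sqrt_sq (by norm_num)]
  ring

lemma sqrt_three_add_inv_sq {x : ℝ} (hx : 0 < x) :
    √(3 + x⁻¹ ^ 2) = √(3 * x ^ 2 + 1) / x := by
  have h : 3 + x⁻¹ ^ 2 = (3 * x ^ 2 + 1) / x ^ 2 := by field_simp
  rw [h, sqrt_div' _ (by positivity), sqrt_sq hx.le]

lemma beta_eq_rho_inv {n : ℕ} (hn : n ≠ 0) : beta n = (rho (n : ℝ)⁻¹ - 1) / 2 := by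
  have hpos : (0 : ℝ) < n := by positivity
  rw [beta, rho, sqrt_three_add_inv_sq hpos]
  field_simp
  ring

lemma alph_eq_rho_inv {n : ℕ} (hn : 2 ≤ n) : alph n = 2 / (3 * (rho (n : ℝ)⁻¹ + 1)) := by
  have hN : (2 : ℝ) ≤ n := by exact_mod_cast hn
  have hsq : √(3 * (n : ℝ) ^ 2 + 1) ^ 2 = 3 * (n : ℝ) ^ 2 + 1 := sq_sqrt (by positivity)
  rw [alph, rho, sqrt_three_add_inv_sq (by linarith),
    div_eq_div_iff (by intro h; linarith) (by positivity)]
  field_simp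
  linear_combination hsq

lemma rho_inv_lt_rho_inv {m n : ℕ} (hm : m ≠ 0) (hmn : m < n) :
    rho (n : ℝ)⁻¹ < rho (m : ℝ)⁻¹ :=
  rho_strictMonoOn (mem_Ici.2 (by positivity)) (mem_Ici.2 (by positivity))
    (inv_strictAnti₀ (by positivity) (by exact_mod_cast hmn))

lemma alph_strictMonoOn : StrictMonoOn alph (Ici 2) := by
  intro m hm n hn hmn
  rw [alph_eq_rho_inv hm, alph_eq_rho_inv hn]
  have hρ := rho_inv_lt_rho_inv (by grind) hmn
  have hρn : 0 < rho (n : ℝ)⁻¹ := rho_pos (by positivity)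
  gcongr

lemma beta_strictAntiOn : StrictAntiOn beta (Ici 1) := by
  intro m hm n hn hmn
  rw [beta_eq_rho_inv (by grind), beta_eq_rho_inv (by grind)]
  have hρ := rho_inv_lt_rho_inv (by grind) hmn
  linarith

lemma alph_lt {n : ℕ} (hn : 2 ≤ n) : alph n < (√3 - 1) / 3 := by
  have hρ : rho 0 < rho (n : ℝ)⁻¹ :=
    rho_strictMonoOn (mem_Ici.2 le_rfl) (mem_Ici.2 (by positivity)) (by positivity)
  have h3 : √3 ^ 2 = 3 := sq_sqrt (by norm_num)
  have hbound : (√3 - 1) / 3 = 2 / (3 * (rho 0 + 1)) := by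
    rw [rho_zero, div_eq_div_iff (by norm_num) (by positivity)]
    linear_combination 3 * h3
  rw [alph_eq_rho_inv hn, hbound]
  have hρ0 := rho_pos le_rfl
  gcongr

lemma beta_two : beta 2 = (√13 - 1) / 4 := by
  rw [beta_eq_rho_inv two_ne_zero, Nat.cast_ofNat, rho_inv_two]
  ring

lemma beta_le {n : ℕ} (hn : 2 ≤ n) : beta n ≤ (√13 - 1) / 4 :=
  beta_two ▸ beta_strictAntiOn.antitoneOn (mem_Ici.2 one_le_two) (mem_Ici.2 (by omega)) hn

theorem stmt_11 (n : ℕ) (hn : 2 ≤ n) :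
    alph n ≤ alph (n + 1) ∧ beta (n + 1) ≤ beta n ∧
    alph n < (Real.sqrt 3 - 1) / 3 ∧ beta n ≤ (Real.sqrt 13 - 1) / 4 :=
  ⟨alph_strictMonoOn.monotoneOn (mem_Ici.2 hn) (mem_Ici.2 (by omega)) n.le_succ,
    beta_strictAntiOn.antitoneOn (mem_Ici.2 (by omega)) (mem_Ici.2 (by omega)) n.le_succ,
    alph_lt hn, beta_le hn⟩
end

section
/- For every integer n ≥ 2 and every real number t with t ≤ 1/2, α_n·(β_n + t) < 7/24. -/
section SqrtBounds

variable {m : ℝ}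

lemma add_one_lt_sqrt_three_mul_sq_add_one (hm : 1 < m) : m + 1 < √(3 * m ^ 2 + 1) :=
  Real.lt_sqrt_of_sq_lt (by nlinarith)

lemma five_mul_add_three_lt_four_mul_sqrt (hm : 1 < m) :
    5 * m + 3 < 4 * √(3 * m ^ 2 + 1) := by
  have hs : √(3 * m ^ 2 + 1) ^ 2 = 3 * m ^ 2 + 1 := Real.sq_sqrt (by positivity)
  nlinarith [Real.sqrt_nonneg (3 * m ^ 2 + 1)]

end SqrtBounds

section AlphBeta

variable {n : ℕ}

lemma alph_pos (hn : 1 < n) : 0 < alph n := by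
  have hm : (1 : ℝ) < n := by exact_mod_cast hn
  unfold alph
  have := add_one_lt_sqrt_three_mul_sq_add_one hm
  apply div_pos <;> linarith

lemma alph_mul_beta_add_half (hn : 1 < n) :
    alph n * (beta n + 1 / 2) = (3 * n - 1 - √(3 * (n : ℝ) ^ 2 + 1)) / (6 * ((n : ℝ) - 1)) := by
  have hm : (1 : ℝ) < n := by exact_mod_cast hn
  have hs : √(3 * (n : ℝ) ^ 2 + 1) ^ 2 = 3 * (n : ℝ) ^ 2 + 1 := Real.sq_sqrt (by positivity)
  have hn0 : (n : ℝ) ≠ 0 := by positivity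
  have hn1 : (n : ℝ) - 1 ≠ 0 := by linarith
  unfold alph beta
  field_simp
  linear_combination 6 * hs

lemma alph_mul_beta_add_half_lt (hn : 1 < n) : alph n * (beta n + 1 / 2) < 7 / 24 := by
  have hm : (1 : ℝ) < n := by exact_mod_cast hn
  rw [alph_mul_beta_add_half hn, div_lt_iff₀ (by linarith)]
  linarith [five_mul_add_three_lt_four_mul_sqrt hm]

end AlphBeta

theorem stmt_12 (n : ℕ) (hn : 2 ≤ n) (t : ℝ) (ht : t ≤ 1 / 2) :
    alph n * (beta n + t) < 7 / 24 :=
  calc alph n * (beta n + t) ≤ alph n * (beta n + 1 / 2) := by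
        gcongr
        exact (alph_pos hn).le
    _ < 7 / 24 := alph_mul_beta_add_half_lt hn
end
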